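/- Let G be a weighted concurrent game and σ_Agt a strategy profile in G with payoff vector p = payoff(σ_Agt). Then σ_Agt is k-resilient if, and only if, the Eve strategy π(σ_Agt) is winning in the deviator game D(G) for the resilience objective Re(k,p) = { ρ : |δ(ρ)| > k } ∪ { ρ : |δ(ρ)| = k and ∀A ∈ δ(ρ), payoff_A(π(ρ)) ≤ p(A) } ∪ { ρ : |δ(ρ)| < k and ∀A ∈ Agt, payoff_A(π(ρ)) ≤ p(A) }. -/

import Mathlib

open Filter

section Defs

variable {Stat Agt Act : Type}

/-- A weighted concurrent game: finite sets of states/players/actions are imposed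
via `Fintype` assumptions in the theorems. -/
structure CGame (Stat Agt Act : Type) where
  s0 : Stat
  Tab : Stat → (Agt → Act) → Stat
  w : Agt → Stat → ℤ

/-- A history: an initial state followed by a finite alternating list of moves and states. -/
abbrev Hist (Stat Agt Act : Type) := Stat × List ((Agt → Act) × Stat)

abbrev Strategy (Stat Agt Act : Type) := Hist Stat Agt Act → Act

abbrev Profile (Stat Agt Act : Type) := Agt → Strategy Stat Agt Act

/-- A play: an infinite alternating sequence of states and moves. -/
structure Play (Stat Agt Act : Type) where
  state : ℕ → Stat
  move : ℕ → Agt → Act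

/-- The prefix `ρ_{≤ m}` of a play: the history containing states `0..m` and moves `0..m-1`. -/
def Play.pref (ρ : Play Stat Agt Act) (m : ℕ) : Hist Stat Agt Act :=
  (ρ.state 0, (List.range m).map fun j => (ρ.move j, ρ.state (j + 1)))

/-- `ρ` respects the transition function of `G` (it is a play of `G`). -/
def IsPlay (G : CGame Stat Agt Act) (ρ : Play Stat Agt Act) : Prop :=
  ∀ j, ρ.state (j + 1) = G.Tab (ρ.state j) (ρ.move j)

/-- The deviators from move `a` to move `a'`. -/
def devMove (a a' : Agt → Act) : Set Agt := {A | a A ≠ a' A}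

/-- The deviators of a play with respect to a strategy profile. -/
def devPlay (σ : Profile Stat Agt Act) (ρ : Play Stat Agt Act) : Set Agt :=
  ⋃ i : ℕ, devMove (ρ.move i) fun A => σ A (ρ.pref i)

/-- The deviators of the prefix `ρ_{≤ i}` with respect to a strategy profile. -/
def devPref (σ : Profile Stat Agt Act) (ρ : Play Stat Agt Act) (i : ℕ) : Set Agt :=
  ⋃ j ∈ Finset.range i, devMove (ρ.move j) fun A => σ A (ρ.pref j)

/-- A play is compatible with the strategy of coalition `C` (move condition). -/
def Compatible (C : Set Agt) (σ : Profile Stat Agt Act) (ρ : Play Stat Agt Act) : Prop :=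
  ∀ j, ∀ A ∈ C, ρ.move j A = σ A (ρ.pref j)

/-- `Out_G(s, σ_C)`: plays of `G` starting at `s` compatible with `σ` on coalition `C`. -/
def OutFrom (G : CGame Stat Agt Act) (s : Stat) (C : Set Agt) (σ : Profile Stat Agt Act) :
    Set (Play Stat Agt Act) :=
  {ρ | ρ.state 0 = s ∧ IsPlay G ρ ∧ Compatible C σ ρ}

open Classical in
/-- The profile `(σ_{-C}, σ'_C)`: agrees with `σ'` on `C` and with `σ` outside `C`. -/
noncomputable def combine (C : Set Agt) (σ σ' : Profile Stat Agt Act) : Profile Stat Agt Act :=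
  fun A => if A ∈ C then σ' A else σ A

/-- Mean payoff of player `A` along a play. -/
noncomputable def payoffPlay (G : CGame Stat Agt Act) (A : Agt) (ρ : Play Stat Agt Act) : ℝ :=
  Filter.liminf
    (fun m => (∑ l ∈ Finset.range (m + 1), (G.w A (ρ.state l) : ℝ)) / (m : ℝ)) Filter.atTop

def histLast (h : Hist Stat Agt Act) : Stat := (h.2.map Prod.snd).getLastD h.1

/-- The history of length `m+1` produced by the strategy profile `σ` from `s0`. -/
def outHist (G : CGame Stat Agt Act) (σ : Profile Stat Agt Act) : ℕ → Hist Stat Agt Act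
  | 0 => (G.s0, [])
  | m + 1 =>
    let h := outHist G σ m
    (h.1, h.2 ++ [(fun A => σ A h, G.Tab (histLast h) fun A => σ A h)])

/-- The unique outcome of a full strategy profile from `s0`. -/
def outcomePlay (G : CGame Stat Agt Act) (σ : Profile Stat Agt Act) : Play Stat Agt Act :=
  ⟨fun m => histLast (outHist G σ m), fun m A => σ A (outHist G σ m)⟩

/-- The payoff vector of a strategy profile. -/
noncomputable def payoffProfile (G : CGame Stat Agt Act) (σ : Profile Stat Agt Act) (A : Agt) :
    ℝ :=
  payoffPlay G A (outcomePlay G σ)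

/-! The deviator game `D(G)`. -/

abbrev DState (Stat Agt : Type) := Stat × Set Agt

abbrev DHist (Stat Agt Act : Type) :=
  DState Stat Agt × List (((Agt → Act) × (Agt → Act)) × DState Stat Agt)

abbrev EveStrategy (Stat Agt Act : Type) := DHist Stat Agt Act → Agt → Act

/-- A play of the deviator game: states together with Eve's and Adam's moves. -/
structure DPlay (Stat Agt Act : Type) where
  state : ℕ → DState Stat Agt
  eveMove : ℕ → Agt → Act
  adamMove : ℕ → Agt → Act

/-- Transition function of the deviator game. -/
def DTab (G : CGame Stat Agt Act) (q : DState Stat Agt) (a a' : Agt → Act) : DState Stat Agt :=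
  (G.Tab q.1 a', q.2 ∪ devMove a a')

def DPlay.pref (ρ : DPlay Stat Agt Act) (m : ℕ) : DHist Stat Agt Act :=
  (ρ.state 0, (List.range m).map fun j => ((ρ.eveMove j, ρ.adamMove j), ρ.state (j + 1)))

/-- Projection of a history of `D(G)` to a history of `G` (first state component, Adam's move). -/
def projHist (h : DHist Stat Agt Act) : Hist Stat Agt Act :=
  (h.1.1, h.2.map fun x => (x.1.2, x.2.1))

/-- Projection `π` of a play of `D(G)` to a play of `G`. -/
def projPlay (ρ : DPlay Stat Agt Act) : Play Stat Agt Act :=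
  ⟨fun i => (ρ.state i).1, ρ.adamMove⟩

/-- The Eve strategy `π(σ_Agt)` associated with a strategy profile. -/
def eveOf (σ : Profile Stat Agt Act) : EveStrategy Stat Agt Act :=
  fun h A => σ A (projHist h)

/-- `δ(ρ)`: the limit of the deviator components along a play of `D(G)`. -/
def delta (ρ : DPlay Stat Agt Act) : Set Agt := ⋃ i : ℕ, (ρ.state i).2

/-- Play of the deviator game from state `q` where Eve follows `σE` and Adam is unconstrained. -/
def IsDPlayFrom (G : CGame Stat Agt Act) (q : DState Stat Agt) (σE : EveStrategy Stat Agt Act)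
    (ρ : DPlay Stat Agt Act) : Prop :=
  ρ.state 0 = q ∧
    ∀ j, ρ.eveMove j = σE (ρ.pref j) ∧
      ρ.state (j + 1) = DTab G (ρ.state j) (ρ.eveMove j) (ρ.adamMove j)

/-- Outcome of an Eve strategy from the initial state `(s0, ∅)` of `D(G)`. -/
def IsOutcome (G : CGame Stat Agt Act) (σE : EveStrategy Stat Agt Act)
    (ρ : DPlay Stat Agt Act) : Prop :=
  IsDPlayFrom G (G.s0, ∅) σE ρ

/-- An Eve strategy is winning for objective `Ω` if all its outcomes belong to `Ω`. -/
def Winning (G : CGame Stat Agt Act) (σE : EveStrategy Stat Agt Act)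
    (Ω : Set (DPlay Stat Agt Act)) : Prop :=
  ∀ ρ, IsOutcome G σE ρ → ρ ∈ Ω

/-- `σ` is `k`-resilient: `C`-resilient for every coalition `C` of size at most `k`. -/
def kResilient (G : CGame Stat Agt Act) (σ : Profile Stat Agt Act) (k : ℕ) : Prop :=
  ∀ C : Set Agt, C.ncard ≤ k → ∀ σ' : Profile Stat Agt Act, ∀ A ∈ C,
    payoffProfile G (combine C σ σ') A ≤ payoffProfile G σ A

/-- `σ` is `(t,r)`-immune: `(C,r)`-immune for every coalition `C` of size at most `t`. -/
def tImmune (G : CGame Stat Agt Act) (σ : Profile Stat Agt Act) (t : ℕ) (r : ℝ) : Prop :=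
  ∀ C : Set Agt, C.ncard ≤ t → ∀ σ' : Profile Stat Agt Act, ∀ A ∉ C,
    payoffProfile G σ A - r ≤ payoffProfile G (combine C σ σ') A

/-- The resilience objective `Re(k,p)`. -/
def ReObj (G : CGame Stat Agt Act) (k : ℕ) (p : Agt → ℝ) : Set (DPlay Stat Agt Act) :=
  {ρ | k < (delta ρ).ncard} ∪
    {ρ | (delta ρ).ncard = k ∧ ∀ A ∈ delta ρ, payoffPlay G A (projPlay ρ) ≤ p A} ∪
    {ρ | (delta ρ).ncard < k ∧ ∀ A : Agt, payoffPlay G A (projPlay ρ) ≤ p A}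

/-- The immunity objective `I(t,r,p)`. -/
def ImmObj (G : CGame Stat Agt Act) (t : ℕ) (r : ℝ) (p : Agt → ℝ) : Set (DPlay Stat Agt Act) :=
  {ρ | t < (delta ρ).ncard} ∪
    {ρ | ∀ A ∉ delta ρ, p A - r ≤ payoffPlay G A (projPlay ρ)}

/-- Mean payoff (liminf) of a weight function on states of `D(G)` along a play. -/
noncomputable def MP (u : DState Stat Agt → ℤ) (ρ : DPlay Stat Agt Act) : ℝ :=
  Filter.liminf
    (fun m => (∑ l ∈ Finset.range (m + 1), (u (ρ.state l) : ℝ)) / (m : ℝ)) Filter.atTop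

/-- Mean payoff (limsup) of a weight function on states of `D(G)` along a play. -/
noncomputable def MPSup (u : DState Stat Agt → ℤ) (ρ : DPlay Stat Agt Act) : ℝ :=
  Filter.limsup
    (fun m => (∑ l ∈ Finset.range (m + 1), (u (ρ.state l) : ℝ)) / (m : ℝ)) Filter.atTop

end Defs

/-! Eve's strategy `π(σ)` only looks at the projected history, so its outcomes in `D(G)` are
exactly the lifts of the plays of `G` from `s0`, and along such a lift `δ` is the set of players
who deviate from `σ`. Conversely, a play whose deviators lie in `C` is the outcome of a deviation
of `C` (the one replaying the play). Hence `k`-resilience says that on every play whose deviators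
fit into a coalition of size at most `k`, each member of that coalition gets at most its payoff
under `σ`; choosing the coalition `δ ∪ {A}` gives the three clauses of `Re(k,p)`. -/

variable {Stat Agt Act : Type}

namespace Play

lemma pref_succ (π : Play Stat Agt Act) (m : ℕ) :
    π.pref (m + 1) = ((π.pref m).1, (π.pref m).2 ++ [(π.move m, π.state (m + 1))]) := by
  simp [pref, List.range_succ]

@[simp]
lemma length_pref (π : Play Stat Agt Act) (m : ℕ) : (π.pref m).2.length = m := by
  simp [pref]

@[simp]
lemma histLast_pref (π : Play Stat Agt Act) (m : ℕ) : histLast (π.pref m) = π.state m := by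
  cases m with
  | zero => rfl
  | succ m => simp [histLast, pref_succ]

def replay (π : Play Stat Agt Act) : Profile Stat Agt Act :=
  fun A h => π.move h.2.length A

end Play

section Outcome

variable (G : CGame Stat Agt Act) (τ : Profile Stat Agt Act)

lemma outcomePlay_pref (m : ℕ) : (outcomePlay G τ).pref m = outHist G τ m := by
  induction m with
  | zero => rfl
  | succ m ih =>
    rw [Play.pref_succ, ih]
    simp [outcomePlay, outHist, histLast]

lemma outcomePlay_mem_outFrom_univ : outcomePlay G τ ∈ OutFrom G G.s0 Set.univ τ := by
  refine ⟨rfl, fun j => ?_, fun j A _ => by rw [outcomePlay_pref]; rfl⟩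
  change histLast (outHist G τ (j + 1)) = _
  simp [outHist, histLast, outcomePlay]

lemma eq_of_mem_outFrom_univ {s : Stat} {π π' : Play Stat Agt Act}
    (hπ : π ∈ OutFrom G s Set.univ τ) (hπ' : π' ∈ OutFrom G s Set.univ τ) : π = π' := by
  obtain ⟨h0, hplay, hcompat⟩ := hπ
  obtain ⟨h0', hplay', hcompat'⟩ := hπ'
  have hmove : ∀ {m}, π.pref m = π'.pref m → π.move m = π'.move m := fun h => funext fun A => by
    rw [hcompat _ A trivial, hcompat' _ A trivial, h]
  have hpref : ∀ m, π.pref m = π'.pref m := by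
    intro m
    induction m with
    | zero => simp [Play.pref, h0, h0']
    | succ m ih =>
      have hstate : π.state m = π'.state m := by
        rw [← Play.histLast_pref, ih, Play.histLast_pref]
      rw [Play.pref_succ, Play.pref_succ, ih, hplay, hplay', hstate, hmove ih]
  have hstate : π.state = π'.state := funext fun m => by
    rw [← Play.histLast_pref, hpref m, Play.histLast_pref]
  cases π; cases π'
  simp only [Play.mk.injEq]
  exact ⟨hstate, funext fun m => hmove (hpref m)⟩

end Outcome

lemma devMove_comm (a a' : Agt → Act) : devMove a a' = devMove a' a := by
  ext A
  exact ne_comm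

lemma devPlay_subset_iff {σ : Profile Stat Agt Act} {π : Play Stat Agt Act} {C : Set Agt} :
    devPlay σ π ⊆ C ↔ Compatible Cᶜ σ π := by
  simp only [devPlay, devMove, Set.iUnion_subset_iff, Set.ofPred_subset, Compatible,
    Set.mem_compl_iff]
  exact forall_congr' fun j => forall_congr' fun A => not_imp_comm

lemma mem_outFrom_compl_iff {G : CGame Stat Agt Act} {s : Stat} {C : Set Agt}
    {σ : Profile Stat Agt Act} {π : Play Stat Agt Act} :
    π ∈ OutFrom G s Cᶜ σ ↔ π.state 0 = s ∧ IsPlay G π ∧ devPlay σ π ⊆ C := by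
  rw [devPlay_subset_iff]
  rfl

lemma outcomePlay_combine_replay {G : CGame Stat Agt Act} {C : Set Agt}
    {σ : Profile Stat Agt Act} {π : Play Stat Agt Act} (hπ : π ∈ OutFrom G G.s0 Cᶜ σ) :
    outcomePlay G (combine C σ π.replay) = π := by
  classical
  obtain ⟨h0, hplay, hcompat⟩ := hπ
  refine eq_of_mem_outFrom_univ G _ (outcomePlay_mem_outFrom_univ G _) ⟨h0, hplay, ?_⟩
  intro j A _
  by_cases hA : A ∈ C
  · simp [combine, hA, Play.replay]
  · simp [combine, hA, hcompat j A hA]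

lemma outcomePlay_combine_mem_outFrom (G : CGame Stat Agt Act) (C : Set Agt)
    (σ σ' : Profile Stat Agt Act) : outcomePlay G (combine C σ σ') ∈ OutFrom G G.s0 Cᶜ σ := by
  obtain ⟨h0, hplay, hcompat⟩ := outcomePlay_mem_outFrom_univ G (combine C σ σ')
  refine ⟨h0, hplay, fun j A hA => ?_⟩
  rw [hcompat j A trivial, combine, if_neg hA]

lemma kResilient_iff_forall_outFrom (G : CGame Stat Agt Act) (σ : Profile Stat Agt Act)
    (k : ℕ) :
    kResilient G σ k ↔ ∀ C : Set Agt, C.ncard ≤ k → ∀ π ∈ OutFrom G G.s0 Cᶜ σ, ∀ A ∈ C,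
      payoffPlay G A π ≤ payoffProfile G σ A := by
  refine ⟨fun hres C hC π hπ A hA => ?_, fun h C hC σ' A hA => ?_⟩
  · rw [← outcomePlay_combine_replay hπ]
    exact hres C hC _ A hA
  · exact h C hC _ (outcomePlay_combine_mem_outFrom G C σ σ') A hA

section DeviatorGame

def liftPlay (σ : Profile Stat Agt Act) (π : Play Stat Agt Act) : DPlay Stat Agt Act :=
  ⟨fun i => (π.state i, devPref σ π i), fun j A => σ A (π.pref j), π.move⟩

variable {G : CGame Stat Agt Act} {σ : Profile Stat Agt Act}

lemma devPref_succ (π : Play Stat Agt Act) (i : ℕ) :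
    devPref σ π (i + 1) = devPref σ π i ∪ devMove (π.move i) fun A => σ A (π.pref i) := by
  simp [devPref, Finset.range_add_one, Set.union_comm]

lemma delta_liftPlay (π : Play Stat Agt Act) : delta (liftPlay σ π) = devPlay σ π := by
  simp only [delta, liftPlay, devPref, devPlay]
  ext A
  simp only [Set.mem_iUnion, Finset.mem_range]
  exact ⟨fun ⟨_, j, _, hj⟩ => ⟨j, hj⟩, fun ⟨j, hj⟩ => ⟨j + 1, j, j.lt_succ_self, hj⟩⟩

lemma projHist_pref (ρ : DPlay Stat Agt Act) (m : ℕ) :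
    projHist (ρ.pref m) = (projPlay ρ).pref m := by
  simp [projHist, DPlay.pref, projPlay, Play.pref]

lemma isOutcome_liftPlay {π : Play Stat Agt Act} (h0 : π.state 0 = G.s0) (hplay : IsPlay G π) :
    IsOutcome G (eveOf σ) (liftPlay σ π) := by
  refine ⟨by simp [liftPlay, h0, devPref], fun j => ⟨?_, ?_⟩⟩
  · exact funext fun A => by rw [eveOf, projHist_pref]; rfl
  · simp only [liftPlay, DTab, hplay j, devPref_succ, devMove_comm (π.move j)]

lemma IsOutcome.eq_liftPlay {ρ : DPlay Stat Agt Act} (hρ : IsOutcome G (eveOf σ) ρ) :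
    ρ = liftPlay σ (projPlay ρ) := by
  obtain ⟨h0, hstep⟩ := hρ
  have heve : ∀ j, ρ.eveMove j = fun A => σ A ((projPlay ρ).pref j) := fun j => by
    rw [(hstep j).1, ← projHist_pref]; rfl
  have hdev : ∀ i, (ρ.state i).2 = devPref σ (projPlay ρ) i := by
    intro i
    induction i with
    | zero => simp [h0, devPref]
    | succ i ih =>
      rw [(hstep i).2, devPref_succ, DTab, ih, heve, devMove_comm]
      rfl
  obtain ⟨state, eveMove, adamMove⟩ := ρ
  simp only [liftPlay, DPlay.mk.injEq]
  exact ⟨funext fun i => Prod.ext rfl (hdev i), funext heve, rfl⟩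

lemma IsOutcome.projPlay_mem_outFrom {ρ : DPlay Stat Agt Act} (hρ : IsOutcome G (eveOf σ) ρ) :
    projPlay ρ ∈ OutFrom G G.s0 ∅ σ := by
  obtain ⟨h0, hstep⟩ := hρ
  refine ⟨by simp [projPlay, h0], fun j => ?_, fun _ _ h => h.elim⟩
  simp [projPlay, (hstep j).2, DTab]

lemma winning_eveOf_iff {Ω : Set (DPlay Stat Agt Act)} :
    Winning G (eveOf σ) Ω ↔ ∀ π, π.state 0 = G.s0 → IsPlay G π → liftPlay σ π ∈ Ω := by
  refine ⟨fun hwin π h0 hplay => hwin _ (isOutcome_liftPlay h0 hplay), fun h ρ hρ => ?_⟩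
  obtain ⟨h0, hplay, -⟩ := hρ.projPlay_mem_outFrom
  rw [hρ.eq_liftPlay]
  exact h _ h0 hplay

lemma liftPlay_mem_reObj_iff {k : ℕ} {p : Agt → ℝ} {π : Play Stat Agt Act} :
    liftPlay σ π ∈ ReObj G k p ↔ k < (devPlay σ π).ncard ∨
      ((devPlay σ π).ncard = k ∧ ∀ A ∈ devPlay σ π, payoffPlay G A π ≤ p A) ∨
      ((devPlay σ π).ncard < k ∧ ∀ A, payoffPlay G A π ≤ p A) := by
  simp only [ReObj, Set.mem_union, Set.mem_ofPred_eq, delta_liftPlay, or_assoc]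
  rfl

end DeviatorGame

theorem statement4_general {Stat Agt Act : Type} [Fintype Agt]
    (G : CGame Stat Agt Act) (σ : Profile Stat Agt Act) (k : ℕ) :
    kResilient G σ k ↔ Winning G (eveOf σ) (ReObj G k (payoffProfile G σ)) := by
  simp only [kResilient_iff_forall_outFrom, winning_eveOf_iff, liftPlay_mem_reObj_iff,
    mem_outFrom_compl_iff]
  constructor
  · intro hres π h0 hplay
    have bound : ∀ A, (insert A (devPlay σ π)).ncard ≤ k →
        payoffPlay G A π ≤ payoffProfile G σ A := fun A hA =>
      hres _ hA π ⟨h0, hplay, Set.subset_insert _ _⟩ A (Set.mem_insert _ _)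
    rcases lt_trichotomy (devPlay σ π).ncard k with hlt | heq | hgt
    · exact Or.inr (Or.inr ⟨hlt, fun A => bound A ((Set.ncard_insert_le _ _).trans hlt)⟩)
    · exact Or.inr (Or.inl ⟨heq, fun A hA => bound A (by rw [Set.insert_eq_of_mem hA, heq])⟩)
    · exact Or.inl hgt
  · rintro hwin C hC π ⟨h0, hplay, hdev⟩ A hA
    have hcard : (devPlay σ π).ncard ≤ C.ncard := Set.ncard_le_ncard hdev
    rcases hwin π h0 hplay with hgt | ⟨heq, hbound⟩ | ⟨-, hbound⟩
    · omega
    · rw [Set.eq_of_subset_of_ncard_le hdev (by omega)] at hbound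
      exact hbound A hA
    · exact hbound A

theorem statement4 {Stat Agt Act : Type} [Fintype Stat] [Fintype Agt] [Fintype Act]
    (G : CGame Stat Agt Act) (σ : Profile Stat Agt Act) (k : ℕ) :
    kResilient G σ k ↔ Winning G (eveOf σ) (ReObj G k (payoffProfile G σ)) :=
  statement4_general G σ k
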